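/- Let X be a real Banach space, T : X ⇉ X* a maximal monotone operator, h ∈ H_a(T), and let h₀ be a minimal element of L(h) with respect to the pointwise order. Then J(J h₀) = h₀. -/

import Mathlib

/- Setting: `X` is a real Banach space, `StrongDual ℝ X` its topological dual.
A point-to-set operator `T : X ⇉ X*` is identified with its graph,
a subset of `X × StrongDual ℝ X`.  Extended-real-valued functions
(`ℝ ∪ {+∞}`) are modelled by `EReal`. -/

noncomputable section

variable {X : Type*} [NormedAddCommGroup X] [NormedSpace ℝ X]

/-- The duality pairing `⟨x, x*⟩ = x*(x)` of a pair `p = (x, x*)`. -/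
def pairingFn (p : X × StrongDual ℝ X) : ℝ := p.2 p.1

/-- Convexity for extended-real-valued functions. -/
def EConvexOn {E : Type*} [AddCommMonoid E] [Module ℝ E] (h : E → EReal) : Prop :=
  ∀ p q : E, ∀ a b : ℝ, 0 ≤ a → 0 ≤ b → a + b = 1 →
    h (a • p + b • q) ≤ (a : EReal) * h p + (b : EReal) * h q

/-- `T` is a monotone operator: `⟨x - y, x* - y*⟩ ≥ 0` on the graph. -/
def MonotoneOp (T : Set (X × StrongDual ℝ X)) : Prop :=
  ∀ p ∈ T, ∀ q ∈ T, 0 ≤ (p.2 - q.2) (p.1 - q.1)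

/-- `T` is maximal monotone. -/
def MaximalMonotoneOp (T : Set (X × StrongDual ℝ X)) : Prop :=
  MonotoneOp T ∧
    ∀ p : X × StrongDual ℝ X, (∀ q ∈ T, 0 ≤ (p.2 - q.2) (p.1 - q.1)) → p ∈ T

/-- The transform `J h (x, x*) = sup_{(y, y*)} ⟨x, y*⟩ + ⟨y, x*⟩ - h (y, y*)`,
i.e. `J h (x, x*) = h* (x*, x)` via the canonical injection `X ↪ X**`. -/
def JT (h : X × StrongDual ℝ X → EReal) : X × StrongDual ℝ X → EReal :=
  fun p => ⨆ q : X × StrongDual ℝ X, (((q.2 p.1 + p.2 q.1 : ℝ) : EReal) - h q)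

/-- The family `H(T)` of convex lower semicontinuous functions on `X × X*`
majorizing the duality product and coinciding with it on `T`. -/
def HT (T : Set (X × StrongDual ℝ X)) : Set (X × StrongDual ℝ X → EReal) :=
  { h | EConvexOn h ∧ LowerSemicontinuous h ∧
      (∀ p : X × StrongDual ℝ X, (pairingFn p : EReal) ≤ h p) ∧
      (∀ p ∈ T, h p = (pairingFn p : EReal)) }

/-- The subfamily `H_a(T) = { h ∈ H(T) | h ≥ J h }`. -/
def Ha (T : Set (X × StrongDual ℝ X)) : Set (X × StrongDual ℝ X → EReal) :=
  { h | h ∈ HT T ∧ JT h ≤ h }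

/-- For `h ∈ H(T)`, the family `L(h) = { g ∈ H(T) | h ≥ g ≥ J g }`. -/
def Lfam (T : Set (X × StrongDual ℝ X)) (h : X × StrongDual ℝ X → EReal) :
    Set (X × StrongDual ℝ X → EReal) :=
  { g | g ∈ HT T ∧ g ≤ h ∧ JT g ≤ g }

/-- The Fenchel–Legendre conjugate `f*(x*) = sup_x ⟨x, x*⟩ - f x`. -/
def fconj (f : X → EReal) : StrongDual ℝ X → EReal :=
  fun x' => ⨆ x : X, (((x' x : ℝ) : EReal) - f x)

/-- The `ε`-subdifferential:
`∂_ε f (x) = { x* | f y ≥ f x + ⟨y - x, x*⟩ - ε for all y }`. -/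
def epsSubdiff (f : X → EReal) (ε : ℝ) (x : X) : Set (StrongDual ℝ X) :=
  { x' | ∀ y : X, f x + ((x' (y - x) - ε : ℝ) : EReal) ≤ f y }

/-- The graph of the subdifferential `∂f = ∂_0 f`. -/
def subdiffGraph (f : X → EReal) : Set (X × StrongDual ℝ X) :=
  { p | p.2 ∈ epsSubdiff f 0 p.1 }

/-- The `ε`-enlargement `T^ε (x) = { x* | ⟨x - y, x* - y*⟩ ≥ -ε for all (y, y*) ∈ T }`. -/
def enl (T : Set (X × StrongDual ℝ X)) (ε : ℝ) (x : X) :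
    Set (StrongDual ℝ X) :=
  { x' | ∀ q ∈ T, -ε ≤ (x' - q.2) (x - q.1) }

/-- The Fitzpatrick function
`φ_T (x, x*) = sup_{(y, y*) ∈ T} ⟨x, y*⟩ + ⟨y, x*⟩ - ⟨y, y*⟩`. -/
def fitz (T : Set (X × StrongDual ℝ X)) : X × StrongDual ℝ X → EReal :=
  fun p => ⨆ q ∈ T, ((q.2 p.1 + p.2 q.1 - q.2 q.1 : ℝ) : EReal)

/- Since `J` is antitone and `J (J f) ≤ f` for every `f`, the inequality `J h₀ ≤ h₀` gives
`J h₀ ≤ J (J h₀) ≤ h₀`, and applying `J` once more gives `J (J (J h₀)) ≤ J (J h₀)`. The function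
`J (J h₀)` is convex and lower semicontinuous as a supremum of affine functions, and it majorizes
the duality product because `J h₀` majorizes the Fitzpatrick function of `T`, which majorizes the
duality product by maximality of `T`. Hence `J (J h₀) ∈ L(h)`, and minimality of `h₀` forces
`J (J h₀) = h₀`. -/

lemma EReal.coe_sub_sub_cancel_le (a : ℝ) (b : EReal) : (a : EReal) - (a - b) ≤ b := by
  induction b using EReal.rec with
  | bot => simp
  | coe b => norm_cast; simp
  | top => simp

section EConvexOn

variable {E : Type*} [AddCommMonoid E] [Module ℝ E]

lemma EConvexOn.iSup {ι : Sort*} {f : ι → E → EReal} (hf : ∀ i, EConvexOn (f i)) :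
    EConvexOn fun x => ⨆ i, f i x := by
  intro p q a b ha hb hab
  refine iSup_le fun i => (hf i p q a b ha hb hab).trans ?_
  gcongr
  · exact le_iSup (fun i => f i p) i
  · exact le_iSup (fun i => f i q) i

lemma econvexOn_coe_sub (ℓ : E →ₗ[ℝ] ℝ) (C : EReal) : EConvexOn fun x => (ℓ x : EReal) - C := by
  intro p q a b ha hb hab
  simp only [map_add, map_smul, smul_eq_mul]
  induction C using EReal.rec with
  | top => simp
  | coe C =>
    norm_cast
    have hC : C = a * C + b * C := by rw [← add_mul, hab, one_mul]
    nlinarith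
  | bot =>
    simp only [EReal.sub_bot (EReal.coe_ne_bot _), top_le_iff]
    rcases ha.eq_or_lt with rfl | ha
    · simp [show b = 1 by linarith]
    · rw [EReal.coe_mul_top_of_pos ha]
      refine EReal.top_add_of_ne_bot ?_
      rcases hb.eq_or_lt with rfl | hb
      · simp
      · simp [EReal.coe_mul_top_of_pos hb]

end EConvexOn

lemma lowerSemicontinuous_coe_sub {E : Type*} [TopologicalSpace E] {g : E → ℝ}
    (hg : Continuous g) (C : EReal) : LowerSemicontinuous fun x => (g x : EReal) - C :=
  EReal.lowerSemicontinuous_add.comp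
    ((continuous_coe_real_ereal.comp hg).prodMk continuous_const)

/-- `crossPairing (y, y*) (x, x*) = ⟨x, y*⟩ + ⟨y, x*⟩`, so that `J h` is the supremum over `q`
of `crossPairing q - h q`. -/
def crossPairing (q : X × StrongDual ℝ X) : X × StrongDual ℝ X →L[ℝ] ℝ :=
  q.2.comp (ContinuousLinearMap.fst ℝ X (StrongDual ℝ X)) +
    (ContinuousLinearMap.apply ℝ ℝ q.1).comp (ContinuousLinearMap.snd ℝ X (StrongDual ℝ X))

lemma econvexOn_JT (f : X × StrongDual ℝ X → EReal) : EConvexOn (JT f) :=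
  EConvexOn.iSup fun q => econvexOn_coe_sub (crossPairing q : X × StrongDual ℝ X →ₗ[ℝ] ℝ) (f q)

lemma lowerSemicontinuous_JT (f : X × StrongDual ℝ X → EReal) : LowerSemicontinuous (JT f) :=
  lowerSemicontinuous_iSup fun q => lowerSemicontinuous_coe_sub (crossPairing q).continuous (f q)

lemma JT_antitone : Antitone (JT : (X × StrongDual ℝ X → EReal) → X × StrongDual ℝ X → EReal) :=
  fun _ _ hfg _ => iSup_mono fun q => EReal.sub_le_sub le_rfl (hfg q)

lemma JT_JT_le (f : X × StrongDual ℝ X → EReal) : JT (JT f) ≤ f := by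
  intro p
  refine iSup_le fun q => ?_
  have hJf : ((q.2 p.1 + p.2 q.1 : ℝ) : EReal) - f p ≤ JT f q :=
    le_iSup_of_le p (by rw [add_comm (q.2 p.1)])
  exact (EReal.sub_le_sub le_rfl hJf).trans (EReal.coe_sub_sub_cancel_le _ _)

lemma fitz_le_JT {T : Set (X × StrongDual ℝ X)} {f : X × StrongDual ℝ X → EReal}
    (hf : ∀ q ∈ T, f q ≤ pairingFn q) : fitz T ≤ JT f := fun p =>
  iSup₂_le fun q hq => le_iSup_of_le q <| by
    rw [EReal.coe_sub]
    exact EReal.sub_le_sub le_rfl (hf q hq)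

lemma MaximalMonotoneOp.pairing_le_fitz {T : Set (X × StrongDual ℝ X)}
    (hT : MaximalMonotoneOp T) (p : X × StrongDual ℝ X) : (pairingFn p : EReal) ≤ fitz T p := by
  obtain ⟨q, hq, hpq⟩ : ∃ q ∈ T, (p.2 - q.2) (p.1 - q.1) ≤ 0 := by
    by_contra! hpos
    have hp : p ∈ T := hT.2 p fun q hq => (hpos q hq).le
    simpa using hpos p hp
  refine le_iSup₂_of_le q hq (EReal.coe_le_coe_iff.2 ?_)
  simp only [sub_apply, map_sub] at hpq
  simp only [pairingFn]
  linarith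

lemma JT_JT_mem_Lfam {T : Set (X × StrongDual ℝ X)} (hT : MaximalMonotoneOp T)
    {h g : X × StrongDual ℝ X → EReal} (hg : g ∈ Lfam T h) : JT (JT g) ∈ Lfam T h := by
  obtain ⟨⟨-, -, -, hgT⟩, hgh, hJg⟩ := hg
  have hJJ_le : JT (JT g) ≤ g := JT_JT_le g
  have hJ_le : JT g ≤ JT (JT g) := JT_antitone hJg
  have hpair : ∀ p, (pairingFn p : EReal) ≤ JT (JT g) p := fun p =>
    (hT.pairing_le_fitz p).trans ((fitz_le_JT fun q hq => (hgT q hq).le) p |>.trans (hJ_le p))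
  refine ⟨⟨econvexOn_JT _, lowerSemicontinuous_JT _, hpair, fun p hp => ?_⟩,
    hJJ_le.trans hgh, JT_antitone hJ_le⟩
  exact le_antisymm ((hJJ_le p).trans (hgT p hp).le) (hpair p)

theorem minimal_is_fixed_point_of_J_squared_general
    (T : Set (X × StrongDual ℝ X)) (hT : MaximalMonotoneOp T)
    (h : X × StrongDual ℝ X → EReal)
    (h₀ : X × StrongDual ℝ X → EReal) (hmin : Minimal (· ∈ Lfam T h) h₀) :
    JT (JT h₀) = h₀ :=
  le_antisymm (JT_JT_le h₀) (hmin.2 (JT_JT_mem_Lfam hT hmin.1) (JT_JT_le h₀))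

/-- for `h ∈ H_a(T)` and `h₀` a minimal element of `L(h)` (pointwise order),
`J (J h₀) = h₀`. -/
theorem minimal_is_fixed_point_of_J_squared [CompleteSpace X]
    (T : Set (X × StrongDual ℝ X)) (hT : MaximalMonotoneOp T)
    (h : X × StrongDual ℝ X → EReal) (hh : h ∈ Ha T)
    (h₀ : X × StrongDual ℝ X → EReal) (hmin : Minimal (· ∈ Lfam T h) h₀) :
    JT (JT h₀) = h₀ :=
  minimal_is_fixed_point_of_J_squared_general T hT h h₀ hmin
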